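/- arXiv:2307.09346 — 2 statements merged into one kernel-verified Lean document; each statement's English description precedes it below -/
import Mathlib

section
/- The spectral radius of the k-uniform hypercycle 𝒞(n,k) of order n (with m = n/(k−1) edges, m ≥ 3, k ≥ 3) equals (k−1+√((k−1)²+8(k−1)))/(2(k−1)). -/
open Finset

/-- A hypergraph on a finite vertex type `V`: a finite set of edges,
each edge a subset of `V` with at least two vertices. -/
structure FinHypergraph (V : Type*) [DecidableEq V] [Fintype V] where
  edges : Finset (Finset V)
  two_le_card : ∀ e ∈ edges, 2 ≤ e.card

namespace FinHypergraph

variable {V : Type*} [DecidableEq V] [Fintype V]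

/-- The adjacency matrix `(A_G)_{ij} = ∑_{e ∋ i,j} 1/(|e|-1)` (zero on the diagonal). -/
noncomputable def adjMatrix (G : FinHypergraph V) : Matrix V V ℝ :=
  Matrix.of fun i j => if i = j then 0 else
    ∑ e ∈ G.edges.filter (fun e => i ∈ e ∧ j ∈ e), (1 : ℝ) / ((e.card : ℝ) - 1)

/-- The spectral radius: the maximum modulus of an eigenvalue of the
(real symmetric) adjacency matrix. -/
noncomputable def spectralRadius (G : FinHypergraph V) : ℝ :=
  sSup {r : ℝ | ∃ (μ : ℝ) (x : V → ℝ), x ≠ 0 ∧ G.adjMatrix.mulVec x = μ • x ∧ r = |μ|}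

/-- `G` is `k`-uniform. -/
def IsUniform (G : FinHypergraph V) (k : ℕ) : Prop := ∀ e ∈ G.edges, e.card = k

/-- `G` is connected. -/
def IsConnected (G : FinHypergraph V) : Prop :=
  Nonempty V ∧ ∀ u v : V,
    Relation.ReflTransGen (fun a b => ∃ e ∈ G.edges, a ∈ e ∧ b ∈ e) u v

/-- Isomorphism of hypergraphs. -/
def Iso {W : Type*} [DecidableEq W] [Fintype W] (G : FinHypergraph V) (H : FinHypergraph W) : Prop :=
  ∃ f : V ≃ W, ∀ s : Finset V, s ∈ G.edges ↔ s.image f ∈ H.edges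

/-- The principal eigenvector: positive, unit norm, eigenvector for the spectral radius. -/
def IsPrincipalEigenvector (G : FinHypergraph V) (X : V → ℝ) : Prop :=
  (∀ v, 0 < X v) ∧ (∑ v, X v ^ 2 = 1) ∧
    G.adjMatrix.mulVec X = G.spectralRadius • X

/-- `G` contains a hypercycle of length `g`. -/
def HasCycleOfLength (G : FinHypergraph V) (g : ℕ) : Prop :=
  2 ≤ g ∧ ∃ (e : ZMod g → Finset V) (v : ZMod g → V),
    Function.Injective e ∧ Function.Injective v ∧
    (∀ i, e i ∈ G.edges) ∧ (∀ i, v i ∈ e i ∧ v (i + 1) ∈ e i) ∧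
    (∀ i j : ZMod g, i ≠ j → j ≠ i + 1 → i ≠ j + 1 → e i ∩ e j = ∅)

/-- The girth of `G` is `g`: the length of a shortest hypercycle. -/
def HasGirth (G : FinHypergraph V) (g : ℕ) : Prop :=
  G.HasCycleOfLength g ∧ ∀ g', G.HasCycleOfLength g' → g ≤ g'

/-- A `k`-uniform unicyclic hypergraph: connected with `n - 1 = (k-1)m - 1`,
i.e. `n = (k-1) m`. -/
def IsUnicyclic (G : FinHypergraph V) (k : ℕ) : Prop :=
  G.IsUniform k ∧ G.IsConnected ∧ Fintype.card V = (k - 1) * G.edges.card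

/-- A supertree: connected and acyclic. -/
def IsSupertree (G : FinHypergraph V) (k : ℕ) : Prop :=
  G.IsUniform k ∧ G.IsConnected ∧ ∀ g, ¬ G.HasCycleOfLength g

/-- `G` is (a copy of) the `k`-uniform hypercycle with `m` edges.
The cycle vertices are `w i t` for `i : ZMod m`, `t : Fin (k-1)`, all distinct;
the `i`-th edge is `{w i 0, w i 1, …, w i (k-2), w (i+1) 0}`, and these are all
the edges and all the vertices. -/
def IsHypercycle (G : FinHypergraph V) (k m : ℕ) (hk : 2 ≤ k) : Prop :=
  ∃ w : ZMod m → Fin (k - 1) → V,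
    (Function.Injective fun p : ZMod m × Fin (k - 1) => w p.1 p.2) ∧
    (∀ s : Finset V, s ∈ G.edges ↔
      ∃ i : ZMod m, s = insert (w (i + 1) ⟨0, by omega⟩) (Finset.image (w i) Finset.univ)) ∧
    (∀ x : V, ∃ p : ZMod m × Fin (k - 1), w p.1 p.2 = x)

/-- `H` is obtained from the `k`-uniform `g`-hypercycle `𝒞_g` (with cycle data `w`,
where `w i 0` plays the role of the cycle vertex `v_{i+1}` and `w i (j+1)` the role
of `v_{a(i+1,j+1)}`, cycle edge `i` being `{w i 0, …, w i (k-2), w (i+1) 0}`)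
by identifying the vertex `u` of the hypergraph `G` with the cycle vertex `w gp.1 gp.2`. -/
def IsCycleGlue {V0 : Type*} [DecidableEq V0] [Fintype V0]
    (H : FinHypergraph V) (k g : ℕ) (hk : 2 ≤ k) (G : FinHypergraph V0) (u : V0)
    (gp : ZMod g × Fin (k - 1)) : Prop :=
  ∃ (ι : V0 ↪ V) (w : ZMod g → Fin (k - 1) → V),
    (Function.Injective fun p : ZMod g × Fin (k - 1) => w p.1 p.2) ∧
    (∀ p : ZMod g × Fin (k - 1), (∃ y, ι y = w p.1 p.2) ↔ p = gp) ∧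
    ι u = w gp.1 gp.2 ∧
    (∀ s : Finset V, s ∈ H.edges ↔
      (∃ t ∈ G.edges, s = t.image ι) ∨
      ∃ i : ZMod g, s = insert (w (i + 1) ⟨0, by omega⟩) (Finset.image (w i) Finset.univ)) ∧
    (∀ x : V, (∃ y, ι y = x) ∨ ∃ p : ZMod g × Fin (k - 1), w p.1 p.2 = x)

/-- `H` is the `k`-uniform lollipop hypergraph: a `g`-hypercycle (cycle data `w`, as in
`IsCycleGlue`) together with a pendant hyperpath of length `s` (path data `q`,
the `j`-th path edge being `{prev, q j 0, …, q j (k-2)}` where `prev` is the gluing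
vertex `w gp.1 gp.2` for `j = 0` and `q (j-1) (k-2)` otherwise). -/
def IsLollipop (H : FinHypergraph V) (k g s : ℕ) (hk : 2 ≤ k)
    (gp : ZMod g × Fin (k - 1)) : Prop :=
  ∃ (w : ZMod g → Fin (k - 1) → V) (q : Fin s → Fin (k - 1) → V),
    Function.Injective
      (Sum.elim (fun p : ZMod g × Fin (k - 1) => w p.1 p.2)
        (fun p : Fin s × Fin (k - 1) => q p.1 p.2)) ∧
    (∀ t : Finset V, t ∈ H.edges ↔
      (∃ i : ZMod g, t = insert (w (i + 1) ⟨0, by omega⟩) (Finset.image (w i) Finset.univ)) ∨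
      ∃ j : Fin s, t = insert
        (if j.1 = 0 then w gp.1 gp.2
          else q ⟨j.1 - 1, lt_of_le_of_lt (Nat.sub_le _ _) j.isLt⟩ ⟨k - 2, by omega⟩)
        (Finset.image (q j) Finset.univ)) ∧
    (∀ x : V, (∃ p : ZMod g × Fin (k - 1), w p.1 p.2 = x) ∨
      ∃ p : Fin s × Fin (k - 1), q p.1 p.2 = x)

/-- `H` is `𝒰*(n,k,g)`: a `g`-hypercycle (cycle data `w`) with `t` pendant edges
attached at the cycle vertex `v₁ = w 0 0`. -/
def IsUStar (H : FinHypergraph V) (k g t : ℕ) (hk : 2 ≤ k) : Prop :=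
  ∃ (w : ZMod g → Fin (k - 1) → V) (P : Fin t → Fin (k - 1) → V),
    Function.Injective
      (Sum.elim (fun p : ZMod g × Fin (k - 1) => w p.1 p.2)
        (fun p : Fin t × Fin (k - 1) => P p.1 p.2)) ∧
    (∀ s : Finset V, s ∈ H.edges ↔
      (∃ i : ZMod g, s = insert (w (i + 1) ⟨0, by omega⟩) (Finset.image (w i) Finset.univ)) ∨
      ∃ b : Fin t, s = insert (w 0 ⟨0, by omega⟩) (Finset.image (P b) Finset.univ)) ∧
    (∀ x : V, (∃ p : ZMod g × Fin (k - 1), w p.1 p.2 = x) ∨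
      ∃ p : Fin t × Fin (k - 1), P p.1 p.2 = x)

/-- An automorphism of a hypergraph: a permutation of the vertices mapping edges
to edges. -/
def IsAutomorphism (G : FinHypergraph V) (σ : Equiv.Perm V) : Prop :=
  ∀ s : Finset V, s ∈ G.edges ↔ s.image σ ∈ G.edges

/-- `H` is the `k`-th power of the ordinary (2-uniform) graph `G`:
each graph edge is enlarged by `k - 2` brand-new vertices, new vertices of
different edges being distinct. -/
def IsKthPower {V0 : Type*} [DecidableEq V0] [Fintype V0]
    (H : FinHypergraph V) (k : ℕ) (G : SimpleGraph V0) : Prop :=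
  ∃ (ι : V0 ↪ V) (f : Sym2 V0 → Finset V),
    (∀ s : Finset V, s ∈ H.edges ↔ ∃ e ∈ G.edgeSet, s = f e) ∧
    (∀ e ∈ G.edgeSet, (f e).card = k) ∧
    (∀ e ∈ G.edgeSet, ∀ v : V0, ι v ∈ f e ↔ v ∈ e) ∧
    (∀ e ∈ G.edgeSet, ∀ e' ∈ G.edgeSet, e ≠ e' → ∀ x ∈ f e, x ∈ f e' → ∃ v : V0, ι v = x) ∧
    (∀ x : V, (∃ v, ι v = x) ∨ ∃ e ∈ G.edgeSet, x ∈ f e)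

/-- `G` is the hypergraph `𝒢(𝒟 vD; p, q; vH ℋ)`: disjoint copies of `D` and `Hh`
together with a pendant hyperpath of length `p` attached at (the copy of) `vD`, and a
hyperpath of length `q` joining (the copy of) `vD` to (the copy of) `vH`; all interior
path vertices are new.  Path data `t` (resp. `r`): the `j`-th edge is
`{prev, t j 0, …, t j (k-2)}` with `prev = ιD vD` for `j = 0` and `t (j-1) (k-2)`
otherwise; the last vertex of the connecting path is identified with `ιH vH`. -/
def IsTwoPathJoin {VD VH : Type*} [DecidableEq VD] [Fintype VD]
    [DecidableEq VH] [Fintype VH]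
    (G : FinHypergraph V) (k p q : ℕ) (hk : 2 ≤ k)
    (D : FinHypergraph VD) (vD : VD) (Hh : FinHypergraph VH) (vH : VH) : Prop :=
  ∃ (ιD : VD ↪ V) (ιH : VH ↪ V)
    (t : Fin p → Fin (k - 1) → V) (r : Fin q → Fin (k - 1) → V),
    (∀ x y, ιD x ≠ ιH y) ∧
    Function.Injective
      (Sum.elim (fun a : Fin p × Fin (k - 1) => t a.1 a.2)
        (fun a : Fin q × Fin (k - 1) => r a.1 a.2)) ∧
    (∀ a : Fin p × Fin (k - 1), (∀ x, ιD x ≠ t a.1 a.2) ∧ (∀ x, ιH x ≠ t a.1 a.2)) ∧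
    (∀ a : Fin q × Fin (k - 1), (∀ x, ιD x ≠ r a.1 a.2) ∧
      ((∃ x, ιH x = r a.1 a.2) ↔ (a.1.1 = q - 1 ∧ a.2.1 = k - 2))) ∧
    (∀ hq : 0 < q, r ⟨q - 1, Nat.sub_lt hq Nat.one_pos⟩ ⟨k - 2, by omega⟩ = ιH vH) ∧
    (∀ s : Finset V, s ∈ G.edges ↔
      (∃ e ∈ D.edges, s = e.image ιD) ∨ (∃ e ∈ Hh.edges, s = e.image ιH) ∨
      (∃ j : Fin p, s = insert
        (if j.1 = 0 then ιD vD
          else t ⟨j.1 - 1, lt_of_le_of_lt (Nat.sub_le _ _) j.isLt⟩ ⟨k - 2, by omega⟩)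
        (Finset.image (t j) Finset.univ)) ∨
      (∃ j : Fin q, s = insert
        (if j.1 = 0 then ιD vD
          else r ⟨j.1 - 1, lt_of_le_of_lt (Nat.sub_le _ _) j.isLt⟩ ⟨k - 2, by omega⟩)
        (Finset.image (r j) Finset.univ))) ∧
    (∀ x : V, (∃ y, ιD y = x) ∨ (∃ y, ιH y = x) ∨
      (∃ a : Fin p × Fin (k - 1), t a.1 a.2 = x) ∨
      ∃ a : Fin q × Fin (k - 1), r a.1 a.2 = x)

end FinHypergraph

/-- The permutation matrix of `σ`: `(P_σ)_{ij} = 1` iff `σ j = i`. -/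
def permMatrix {V : Type*} [DecidableEq V] [Fintype V] (σ : Equiv.Perm V) :
    Matrix V V ℝ :=
  Matrix.of fun i j => if σ j = i then (1 : ℝ) else 0

/-- The spectral radius of a real square matrix: the maximum modulus of a (real)
eigenvalue. -/
noncomputable def matSpectralRadius {n : ℕ} (A : Matrix (Fin n) (Fin n) ℝ) : ℝ :=
  sSup {r : ℝ | ∃ (μ : ℝ) (x : Fin n → ℝ), x ≠ 0 ∧ A.mulVec x = μ • x ∧ r = |μ|}


/-- The spectral radius of the `k`-uniform hypercycle `𝒞(n,k)`
of order `n` with `m = n/(k-1)` edges (`m ≥ 3`, `k ≥ 3`) equals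
`(k-1+√((k-1)²+8(k-1)))/(2(k-1))`. -/
theorem hypercycle_spectral_radius
    {V : Type*} [DecidableEq V] [Fintype V]
    (k m n : ℕ) (hk : 3 ≤ k) (hm : 3 ≤ m)
    (G : FinHypergraph V) (hn : Fintype.card V = n) (hnm : n = m * (k - 1))
    (hcyc : G.IsHypercycle k m (by omega)) :
    G.spectralRadius =
      ((k : ℝ) - 1 + Real.sqrt (((k : ℝ) - 1) ^ 2 + 8 * ((k : ℝ) - 1))) /
        (2 * ((k : ℝ) - 1)) := by
  
  classical
  haveI : NeZero m := ⟨by omega⟩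
  obtain ⟨w, hwinj, hedge, hsurj⟩ := hcyc
  have hk1 : 0 < k - 1 := by omega
  have hk2 : 1 < k - 1 := by omega
  have hW : ∀ {i : ZMod m} {t : Fin (k-1)} {i' : ZMod m} {t' : Fin (k-1)},
      w i t = w i' t' → i = i' ∧ t = t' := by
    intro i t i' t' h
    have h2 := hwinj (a₁ := (i, t)) (a₂ := (i', t')) h
    exact ⟨congrArg Prod.fst h2, congrArg Prod.snd h2⟩
  have hone : (1 : ZMod m) ≠ 0 := by
    haveI : Fact (1 < m) := ⟨by omega⟩
    exact one_ne_zero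
  set z : Fin (k-1) := ⟨0, hk1⟩ with hzdef
  -- real constants
  set c : ℝ := (k : ℝ) - 1 with hcdef
  have hkc : (3:ℝ) ≤ (k:ℝ) := by exact_mod_cast hk
  have hc2 : (2:ℝ) ≤ c := by rw [hcdef]; linarith
  have hc0 : (0:ℝ) < c := by linarith
  set s : ℝ := Real.sqrt (c ^ 2 + 8 * c) with hsdef
  have hs2 : s ^ 2 = c ^ 2 + 8 * c := Real.sq_sqrt (by nlinarith)
  have hs0 : (0:ℝ) ≤ s := Real.sqrt_nonneg _
  have hsc : c < s := by nlinarith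
  set lam : ℝ := (c + s) / (2 * c) with hlamdef
  have hlam0 : 0 < lam := by
    rw [hlamdef]; positivity
  set a : ℝ := (s - c + 4) / 2 with hadef
  have ha0 : 0 < a := by rw [hadef]; linarith
  -- the eigenvector
  set X : V → ℝ := fun v => if ∃ j : ZMod m, w j z = v then a else 2 with hXdef
  have hXpos : ∀ v, 0 < X v := by
    intro v
    rw [hXdef]
    by_cases h : ∃ j : ZMod m, w j z = v
    · simp only [h, if_true]; exact ha0
    · simp only [h, if_false]; norm_num
  have hXw : ∀ (i : ZMod m) (t : Fin (k-1)), X (w i t) = if t = z then a else 2 := by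
    intro i t
    simp only [hXdef]
    by_cases ht : t = z
    · subst ht
      rw [if_pos (⟨i, rfl⟩ : ∃ j : ZMod m, w j z = w i z), if_pos rfl]
    · have hne : ¬ ∃ j : ZMod m, w j z = w i t := by
        rintro ⟨j, hj⟩
        exact ht ((hW hj).2).symm
      rw [if_neg hne, if_neg ht]
  -- the edges
  set E : ZMod m → Finset V := fun i => insert (w (i+1) z) (Finset.image (w i) Finset.univ)
    with hEdef
  have hwi_inj : ∀ i : ZMod m, Function.Injective (w i) := by
    intro i t t' h; exact (hW h).2
  have hnotmem : ∀ i : ZMod m, w (i+1) z ∉ Finset.image (w i) Finset.univ := by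
    intro i h
    rw [Finset.mem_image] at h
    obtain ⟨t, -, ht⟩ := h
    have := (hW ht).1
    apply hone
    have h2 : i + 1 = i + 0 := by rw [add_zero]; exact this.symm
    exact add_left_cancel h2
  have hedge' : ∀ t : Finset V, t ∈ G.edges ↔ ∃ i : ZMod m, t = E i := by
    intro t; exact hedge t
  have hEeq : G.edges = Finset.image E Finset.univ := by
    ext t
    rw [hedge']
    simp only [Finset.mem_image, Finset.mem_univ, true_and]
    constructor
    · rintro ⟨i, rfl⟩; exact ⟨i, rfl⟩
    · rintro ⟨i, rfl⟩; exact ⟨i, rfl⟩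
  have hcardE : ∀ i : ZMod m, (E i).card = k := by
    intro i
    rw [hEdef]
    rw [Finset.card_insert_of_notMem (hnotmem i),
      Finset.card_image_of_injective _ (hwi_inj i)]
    simp only [Finset.card_univ, Fintype.card_fin]
    omega
  have hEinj : Function.Injective E := by
    intro i j h
    have h1 : w i ⟨1, hk2⟩ ∈ E i := by
      rw [hEdef]; exact Finset.mem_insert_of_mem (Finset.mem_image_of_mem _ (Finset.mem_univ _))
    rw [h, hEdef] at h1
    rcases Finset.mem_insert.mp h1 with h2 | h2
    · exact absurd (congrArg Fin.val (hW h2).2) (by simp)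
    · rw [Finset.mem_image] at h2
      obtain ⟨t, -, ht⟩ := h2
      exact ((hW ht).1).symm
  have hmemE : ∀ (i : ZMod m) (t : Fin (k-1)) (j : ZMod m),
      w i t ∈ E j ↔ (j = i ∨ (t = z ∧ j = i - 1)) := by
    intro i t j
    rw [hEdef]
    simp only [Finset.mem_insert, Finset.mem_image, Finset.mem_univ, true_and]
    constructor
    · rintro (h | ⟨u, hu⟩)
      · obtain ⟨h1, h2⟩ := hW h
        right; exact ⟨h2, by rw [eq_sub_iff_add_eq]; exact h1.symm⟩
      · left; exact (hW hu).1
    · rintro (rfl | ⟨rfl, rfl⟩)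
      · exact Or.inr ⟨t, rfl⟩
      · left; congr 1; rw [sub_add_cancel]
  -- sum of X over an edge
  have hsumFin : (∑ t : Fin (k-1), if t = z then a else 2) = a + (c - 1) * 2 := by
    have h1 : ∀ t : Fin (k-1), (if t = z then a else 2) = (if t = z then a - 2 else 0) + 2 := by
      intro t; by_cases h : t = z <;> simp [h]
    rw [Finset.sum_congr rfl (fun t _ => h1 t), Finset.sum_add_distrib,
      Finset.sum_ite_eq' Finset.univ z (fun _ => a - 2), if_pos (Finset.mem_univ z)]
    rw [Finset.sum_const, Finset.card_univ, Fintype.card_fin, nsmul_eq_mul]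
    have hcc : ((k - 1 : ℕ) : ℝ) = c := by
      rw [hcdef, Nat.cast_sub (by omega : 1 ≤ k)]; norm_num
    rw [hcc]; ring
  have hsumE : ∀ j : ZMod m, ∑ u ∈ E j, X u = 2 * a + (c - 1) * 2 := by
    intro j
    rw [hEdef]
    rw [Finset.sum_insert (hnotmem j), Finset.sum_image (fun t _ t' _ h => hwi_inj j h)]
    have h1 : X (w (j+1) z) = a := by rw [hXw, if_pos rfl]
    rw [h1, Finset.sum_congr rfl (fun t _ => hXw j t), hsumFin]
    ring
  -- the mulVec formula
  have hmv : ∀ v : V, (G.adjMatrix.mulVec X) v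
      = ∑ j : ZMod m, (if v ∈ E j then (∑ u ∈ (E j).erase v, X u) / c else 0) := by
    intro v
    have hAv : ∀ u : V, G.adjMatrix v u * X u
        = ∑ j : ZMod m, (if v ≠ u ∧ v ∈ E j ∧ u ∈ E j then X u / c else 0) := by
      intro u
      by_cases hvu : v = u
      · subst hvu
        simp [FinHypergraph.adjMatrix]
      · have h1 : G.adjMatrix v u
            = ∑ e ∈ G.edges.filter (fun e => v ∈ e ∧ u ∈ e), (1:ℝ) / ((e.card : ℝ) - 1) := by
          simp only [FinHypergraph.adjMatrix, Matrix.of_apply, if_neg hvu]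
        rw [h1, Finset.sum_filter, hEeq,
          Finset.sum_image (fun i _ j _ h => hEinj h), Finset.sum_mul]
        refine Finset.sum_congr rfl (fun j _ => ?_)
        rw [hcardE j]
        have hck : ((k : ℝ) - 1) = c := by rw [hcdef]
        by_cases h : v ∈ E j ∧ u ∈ E j
        · rw [if_pos h, if_pos ⟨hvu, h⟩, hck]
          field_simp
        · rw [if_neg h, if_neg (by tauto), zero_mul]
    calc (G.adjMatrix.mulVec X) v = ∑ u : V, G.adjMatrix v u * X u := rfl
      _ = ∑ u : V, ∑ j : ZMod m, (if v ≠ u ∧ v ∈ E j ∧ u ∈ E j then X u / c else 0) :=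
          Finset.sum_congr rfl (fun u _ => hAv u)
      _ = ∑ j : ZMod m, ∑ u : V, (if v ≠ u ∧ v ∈ E j ∧ u ∈ E j then X u / c else 0) :=
          Finset.sum_comm
      _ = ∑ j : ZMod m, (if v ∈ E j then (∑ u ∈ (E j).erase v, X u) / c else 0) := by
          refine Finset.sum_congr rfl (fun j _ => ?_)
          by_cases hv : v ∈ E j
          · rw [if_pos hv]
            have h2 : ∀ u : V, (if v ≠ u ∧ v ∈ E j ∧ u ∈ E j then X u / c else 0)
                = if u ∈ (E j).erase v then X u / c else 0 := by
              intro u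
              refine if_congr ?_ rfl rfl
              rw [Finset.mem_erase]
              constructor
              · rintro ⟨h1, -, h3⟩; exact ⟨Ne.symm h1, h3⟩
              · rintro ⟨h1, h3⟩; exact ⟨Ne.symm h1, hv, h3⟩
            rw [Finset.sum_congr rfl (fun u _ => h2 u), Finset.sum_ite_mem,
              Finset.univ_inter, ← Finset.sum_div]
          · rw [if_neg hv]
            refine Finset.sum_eq_zero (fun u _ => ?_)
            rw [if_neg (by tauto)]
  -- key arithmetic identities
  have keyb : (2 * a + (c - 1) * 2 - 2) / c = lam * 2 := by
    rw [hadef, hlamdef]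
    field_simp
    ring
  have keya : (2 * a + (c - 1) * 2 - a) / c + (2 * a + (c - 1) * 2 - a) / c = lam * a := by
    rw [hadef, hlamdef]
    rw [← add_div, div_eq_iff (ne_of_gt hc0)]
    have : (c + s) / (2 * c) * ((s - c + 4) / 2) * c = (s^2 + 4*s - c^2 + 4*c) / 4 := by
      field_simp; ring
    rw [this, hs2]; ring
  -- the eigen equation
  have hAX : G.adjMatrix.mulVec X = lam • X := by
    funext v
    obtain ⟨p, rfl⟩ := hsurj v
    obtain ⟨i, t⟩ := p
    simp only [Pi.smul_apply, smul_eq_mul]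
    rw [hmv, hXw]
    by_cases ht : t = z
    · subst ht
      rw [if_pos rfl]
      have hii : i ≠ i - 1 := by
        intro h
        exact hone (by linear_combination h)
      have hcond : ∀ j : ZMod m, (w i z ∈ E j) ↔ (j = i ∨ j = i - 1) := by
        intro j; rw [hmemE]; simp
      have hsplit : ∀ j : ZMod m,
          (if w i z ∈ E j then (∑ u ∈ (E j).erase (w i z), X u) / c else 0)
          = (if j = i then (∑ u ∈ (E j).erase (w i z), X u) / c else 0)
            + (if j = i - 1 then (∑ u ∈ (E j).erase (w i z), X u) / c else 0) := by
        intro j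
        rw [if_congr (hcond j) rfl rfl]
        by_cases h1 : j = i
        · subst h1
          rw [if_pos (Or.inl rfl), if_pos rfl, if_neg hii, add_zero]
        · by_cases h2 : j = i - 1
          · subst h2
            rw [if_pos (Or.inr rfl), if_neg h1, if_pos rfl, zero_add]
          · rw [if_neg (by tauto), if_neg h1, if_neg h2, add_zero]
      rw [Finset.sum_congr rfl (fun j _ => hsplit j), Finset.sum_add_distrib,
        Finset.sum_ite_eq' Finset.univ i, Finset.sum_ite_eq' Finset.univ (i - 1)]
      simp only [Finset.mem_univ, if_true]
      have hv1 : w i z ∈ E i := (hcond i).mpr (Or.inl rfl)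
      have hv2 : w i z ∈ E (i - 1) := (hcond (i - 1)).mpr (Or.inr rfl)
      rw [Finset.sum_erase_eq_sub hv1, Finset.sum_erase_eq_sub hv2, hsumE, hsumE, hXw,
        if_pos rfl]
      exact keya
    · rw [if_neg ht]
      have hcond : ∀ j : ZMod m, (w i t ∈ E j) ↔ (j = i) := by
        intro j; rw [hmemE]; simp [ht]
      have h3 : ∀ j : ZMod m,
          (if w i t ∈ E j then (∑ u ∈ (E j).erase (w i t), X u) / c else 0)
          = (if j = i then (∑ u ∈ (E j).erase (w i t), X u) / c else 0) := by
        intro j; rw [if_congr (hcond j) rfl rfl]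
      rw [Finset.sum_congr rfl (fun j _ => h3 j), Finset.sum_ite_eq' Finset.univ i]
      simp only [Finset.mem_univ, if_true]
      have hv1 : w i t ∈ E i := (hcond i).mpr rfl
      rw [Finset.sum_erase_eq_sub hv1, hsumE, hXw, if_neg ht]
      exact keyb
  -- symmetry and nonnegativity of the adjacency matrix
  have hAsymm : ∀ u v : V, G.adjMatrix u v = G.adjMatrix v u := by
    intro u v
    by_cases h : u = v
    · subst h; rfl
    · simp only [FinHypergraph.adjMatrix, Matrix.of_apply, if_neg h, if_neg (Ne.symm h)]
      refine Finset.sum_congr ?_ (fun _ _ => rfl)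
      refine Finset.filter_congr (fun e _ => ?_)
      exact and_comm
  have hAnn : ∀ u v : V, 0 ≤ G.adjMatrix u v := by
    intro u v
    simp only [FinHypergraph.adjMatrix, Matrix.of_apply]
    split
    · exact le_refl 0
    · refine Finset.sum_nonneg (fun e he => ?_)
      have h2 : 2 ≤ e.card := G.two_le_card e (Finset.mem_filter.mp he).1
      have : (1:ℝ) ≤ (e.card : ℝ) - 1 := by
        have : (2:ℝ) ≤ (e.card : ℝ) := by exact_mod_cast h2
        linarith
      positivity
  -- upper bound
  have hub : ∀ (μ : ℝ) (y : V → ℝ), y ≠ 0 → G.adjMatrix.mulVec y = μ • y → |μ| ≤ lam := by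
    intro μ y hy heig
    obtain ⟨v0, hv0⟩ := Function.ne_iff.mp hy
    have hT : 0 < ∑ v : V, |y v| * X v := by
      refine Finset.sum_pos' (fun v _ => mul_nonneg (abs_nonneg _) (hXpos v).le) ?_
      exact ⟨v0, Finset.mem_univ _, mul_pos (abs_pos.mpr hv0) (hXpos v0)⟩
    have hchain : |μ| * ∑ v : V, |y v| * X v ≤ lam * ∑ v : V, |y v| * X v := by
      calc |μ| * ∑ v : V, |y v| * X v
          = ∑ v : V, |μ * y v| * X v := by
            rw [Finset.mul_sum]
            exact Finset.sum_congr rfl (fun v _ => by rw [abs_mul]; ring)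
        _ = ∑ v : V, |(G.adjMatrix.mulVec y) v| * X v := by
            refine Finset.sum_congr rfl (fun v _ => ?_)
            have := congrFun heig v
            rw [this, Pi.smul_apply, smul_eq_mul]
        _ ≤ ∑ v : V, (∑ u : V, G.adjMatrix v u * |y u|) * X v := by
            refine Finset.sum_le_sum (fun v _ => ?_)
            refine mul_le_mul_of_nonneg_right ?_ (hXpos v).le
            calc |(G.adjMatrix.mulVec y) v| = |∑ u : V, G.adjMatrix v u * y u| := rfl
              _ ≤ ∑ u : V, |G.adjMatrix v u * y u| := Finset.abs_sum_le_sum_abs _ _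
              _ = ∑ u : V, G.adjMatrix v u * |y u| := by
                  refine Finset.sum_congr rfl (fun u _ => ?_)
                  rw [abs_mul, abs_of_nonneg (hAnn v u)]
        _ = ∑ v : V, ∑ u : V, G.adjMatrix v u * |y u| * X v :=
            Finset.sum_congr rfl (fun v _ => Finset.sum_mul _ _ _)
        _ = ∑ u : V, ∑ v : V, G.adjMatrix v u * |y u| * X v := Finset.sum_comm
        _ = ∑ u : V, |y u| * (∑ v : V, G.adjMatrix u v * X v) := by
            refine Finset.sum_congr rfl (fun u _ => ?_)
            rw [Finset.mul_sum]
            refine Finset.sum_congr rfl (fun v _ => ?_)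
            rw [hAsymm v u]; ring
        _ = ∑ u : V, |y u| * (lam * X u) := by
            refine Finset.sum_congr rfl (fun u _ => ?_)
            have : (G.adjMatrix.mulVec X) u = lam * X u := by
              rw [hAX, Pi.smul_apply, smul_eq_mul]
            rw [← this]; rfl
        _ = lam * ∑ v : V, |y v| * X v := by
            rw [Finset.mul_sum]
            exact Finset.sum_congr rfl (fun v _ => by ring)
    exact le_of_mul_le_mul_right hchain hT
  -- conclude
  have hXne : X ≠ 0 := by
    intro h
    have := congrFun h (w 0 z)
    exact absurd this (ne_of_gt (hXpos (w 0 z)))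
  have hmemS : lam ∈ {r : ℝ | ∃ (μ : ℝ) (x : V → ℝ),
      x ≠ 0 ∧ G.adjMatrix.mulVec x = μ • x ∧ r = |μ|} :=
    ⟨lam, X, hXne, hAX, (abs_of_pos hlam0).symm⟩
  have hbdd : ∀ r ∈ {r : ℝ | ∃ (μ : ℝ) (x : V → ℝ),
      x ≠ 0 ∧ G.adjMatrix.mulVec x = μ • x ∧ r = |μ|}, r ≤ lam := by
    rintro r ⟨μ, y, hy, he, rfl⟩
    exact hub μ y hy he
  show sSup {r : ℝ | ∃ (μ : ℝ) (x : V → ℝ),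
      x ≠ 0 ∧ G.adjMatrix.mulVec x = μ • x ∧ r = |μ|} = lam
  refine le_antisymm (csSup_le ⟨lam, hmemS⟩ hbdd) (le_csSup ⟨lam, hbdd⟩ hmemS)
end

section
/- Let e be a k-subset of vertices of a connected hypergraph 𝒢 that is not an edge of 𝒢, and suppose 𝒢' = 𝒢 + e (adding e as a new edge) is connected. Then ρ(𝒢') > ρ(𝒢). -/
open Finset

section MatrixLemmas


noncomputable def quadForm {V : Type*} [Fintype V] (A : Matrix V V ℝ) (x : V → ℝ) : ℝ :=
  ∑ i, A.mulVec x i * x i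

lemma quadForm_double {V : Type*} [Fintype V] (A : Matrix V V ℝ) (x : V → ℝ) :
    quadForm A x = ∑ i, ∑ j, A i j * x j * x i := by
  simp [quadForm, Matrix.mulVec, dotProduct, Finset.sum_mul]

lemma norm_eq_one_iff {V : Type*} [Fintype V] (y : EuclideanSpace ℝ V) :
    ‖y‖ = 1 ↔ ∑ i, y i ^ 2 = 1 := by
  rw [EuclideanSpace.norm_eq, Real.sqrt_eq_one]
  simp [sq_abs]

lemma reApply_eq_quadForm {V : Type*} [DecidableEq V] [Fintype V] (A : Matrix V V ℝ)
    (y : EuclideanSpace ℝ V) :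
    (LinearMap.toContinuousLinearMap (Matrix.toEuclideanLin A)).reApplyInnerSelf y
      = quadForm A (WithLp.equiv 2 (V → ℝ) y) := by
  simp [ContinuousLinearMap.reApplyInnerSelf, ContinuousLinearMap.coe_coe,
    LinearMap.coe_toContinuousLinearMap', PiLp.inner_apply, RCLike.inner_apply,
    starRingEnd_apply, Matrix.toEuclideanLin_apply, quadForm]
  exact Finset.sum_congr rfl fun _ _ => mul_comm _ _

lemma maxOn_eigen {V : Type*} [DecidableEq V] [Fintype V]
    (A : Matrix V V ℝ) (hsym : A.IsHermitian) {x : V → ℝ}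
    (hx : ∑ i, x i ^ 2 = 1)
    (hmax : ∀ y : V → ℝ, (∑ i, y i ^ 2 = 1) → quadForm A y ≤ quadForm A x) :
    A.mulVec x = quadForm A x • x := by
  set T : EuclideanSpace ℝ V →L[ℝ] EuclideanSpace ℝ V :=
    LinearMap.toContinuousLinearMap (Matrix.toEuclideanLin A) with hT
  have hsa : IsSelfAdjoint T := by
    rw [ContinuousLinearMap.isSelfAdjoint_iff_isSymmetric]
    have := Matrix.isHermitian_iff_isSymmetric.mp hsym
    exact this
  set x₀ : EuclideanSpace ℝ V := (WithLp.equiv 2 (V → ℝ)).symm x with hx₀def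
  have hcoord : (WithLp.equiv 2 (V → ℝ)) x₀ = x := rfl
  have hnx₀ : ‖x₀‖ = 1 := by
    rw [norm_eq_one_iff]
    simpa [hx₀def] using hx
  have hx₀ : x₀ ≠ 0 := by
    intro h; rw [h, norm_zero] at hnx₀; norm_num at hnx₀
  have hextr : IsMaxOn T.reApplyInnerSelf (Metric.sphere (0 : EuclideanSpace ℝ V) ‖x₀‖) x₀ := by
    intro y hy
    have hy1 : ‖y‖ = 1 := by simpa [hnx₀] using mem_sphere_zero_iff_norm.mp hy
    have hy2 : ∑ i, ((WithLp.equiv 2 (V → ℝ)) y) i ^ 2 = 1 := by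
      exact (norm_eq_one_iff y).mp hy1
    simp only [Set.mem_setOf_eq, hT]
    rw [reApply_eq_quadForm, reApply_eq_quadForm, hcoord]
    exact hmax _ hy2
  obtain ⟨hmem, -⟩ := hsa.hasEigenvector_of_isMaxOn hx₀ hextr
  rw [Module.End.mem_eigenspace_iff] at hmem
  set μ : ℝ := ↑(⨆ x : { x : EuclideanSpace ℝ V // x ≠ 0 }, T.rayleighQuotient x) with hμ
  have hTx : T x₀ = μ • x₀ := hmem
  have hmv : A.mulVec x = μ • x := by
    have := congrArg (WithLp.equiv 2 (V → ℝ)) hTx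
    simpa [hT, Matrix.toEuclideanLin_apply, hcoord, hx₀def] using this
  have hq : quadForm A x = μ := by
    rw [quadForm, hmv]
    simp only [Pi.smul_apply, smul_eq_mul, mul_assoc, ← Finset.mul_sum]
    simp [← sq, hx]
  rw [hq]; exact hmv

lemma quadForm_smul {V : Type*} [Fintype V] (A : Matrix V V ℝ) (c : ℝ) (x : V → ℝ) :
    quadForm A (c • x) = c ^ 2 * quadForm A x := by
  simp only [quadForm, Matrix.mulVec_smul, Pi.smul_apply, smul_eq_mul, Finset.mul_sum]
  congr 1; ext i; ring

lemma quadForm_abs_le {V : Type*} [Fintype V] (A : Matrix V V ℝ)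
    (hnn : ∀ i j, 0 ≤ A i j) (x : V → ℝ) :
    |quadForm A x| ≤ quadForm A (fun i => |x i|) := by
  rw [quadForm_double, quadForm_double]
  refine le_trans (Finset.abs_sum_le_sum_abs _ _) (Finset.sum_le_sum fun i _ => ?_)
  refine le_trans (Finset.abs_sum_le_sum_abs _ _) (Finset.sum_le_sum fun j _ => ?_)
  rw [abs_mul, abs_mul, abs_of_nonneg (hnn i j)]

lemma quadForm_le_abs {V : Type*} [Fintype V] (A : Matrix V V ℝ)
    (hnn : ∀ i j, 0 ≤ A i j) (x : V → ℝ) :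
    quadForm A x ≤ quadForm A (fun i => |x i|) :=
  le_trans (le_abs_self _) (quadForm_abs_le A hnn x)

lemma quadForm_nonneg {V : Type*} [Fintype V] (A : Matrix V V ℝ)
    (hnn : ∀ i j, 0 ≤ A i j) (x : V → ℝ) (hx : ∀ i, 0 ≤ x i) :
    0 ≤ quadForm A x := by
  rw [quadForm_double]
  exact Finset.sum_nonneg fun i _ => Finset.sum_nonneg fun j _ =>
    mul_nonneg (mul_nonneg (hnn i j) (hx j)) (hx i)

lemma exists_nonneg_max {V : Type*} [DecidableEq V] [Fintype V] [Nonempty V]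
    (A : Matrix V V ℝ) (hnn : ∀ i j, 0 ≤ A i j) :
    ∃ x : V → ℝ, (∀ i, 0 ≤ x i) ∧ (∑ i, x i ^ 2 = 1) ∧
      ∀ y : V → ℝ, (∑ i, y i ^ 2 = 1) → quadForm A y ≤ quadForm A x := by
  set T : EuclideanSpace ℝ V →L[ℝ] EuclideanSpace ℝ V :=
    LinearMap.toContinuousLinearMap (Matrix.toEuclideanLin A) with hT
  have hcpt : IsCompact (Metric.sphere (0 : EuclideanSpace ℝ V) 1) := isCompact_sphere _ _
  have hne : (Metric.sphere (0 : EuclideanSpace ℝ V) 1).Nonempty := by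
    set i₀ := Classical.arbitrary V
    refine ⟨(WithLp.equiv 2 (V → ℝ)).symm (fun i => if i = i₀ then 1 else 0), ?_⟩
    rw [mem_sphere_zero_iff_norm, norm_eq_one_iff]
    simp [PiLp.toLp_apply, Finset.sum_ite_eq']
  obtain ⟨x₀, hx₀mem, hx₀max⟩ :=
    hcpt.exists_isMaxOn hne (T.reApplyInnerSelf_continuous.continuousOn)
  set x : V → ℝ := WithLp.equiv 2 (V → ℝ) x₀ with hxdef
  have hx1 : ∑ i, x i ^ 2 = 1 := by
    exact (norm_eq_one_iff x₀).mp (by simpa using mem_sphere_zero_iff_norm.mp hx₀mem)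
  have hmax : ∀ y : V → ℝ, (∑ i, y i ^ 2 = 1) → quadForm A y ≤ quadForm A x := by
    intro y hy
    have hymem : (WithLp.equiv 2 (V → ℝ)).symm y ∈ Metric.sphere (0 : EuclideanSpace ℝ V) 1 := by
      rw [mem_sphere_zero_iff_norm, norm_eq_one_iff]; simpa using hy
    have := hx₀max hymem
    simp only [Set.mem_setOf_eq, hT, reApply_eq_quadForm] at this
    simpa [hxdef] using this
  refine ⟨fun i => |x i|, fun i => abs_nonneg _, by simpa [sq_abs] using hx1, fun y hy => ?_⟩
  exact le_trans (hmax y hy) (quadForm_le_abs A hnn x)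

lemma quadForm_le_bound {V : Type*} [Fintype V]
    (A : Matrix V V ℝ) {x : V → ℝ}
    (hmax : ∀ y : V → ℝ, (∑ i, y i ^ 2 = 1) → quadForm A y ≤ quadForm A x)
    (y : V → ℝ) : quadForm A y ≤ quadForm A x * ∑ i, y i ^ 2 := by
  by_cases hS : ∑ i, y i ^ 2 = 0
  · have hy0 : y = 0 := by
      funext i
      have := (Finset.sum_eq_zero_iff_of_nonneg (fun i _ => sq_nonneg (y i))).mp hS i (mem_univ i)
      exact pow_eq_zero_iff (two_ne_zero) |>.mp this
    simp [hy0, quadForm, Matrix.mulVec_zero, hS]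
  · set S := ∑ i, y i ^ 2 with hSdef
    have hSpos : 0 < S := lt_of_le_of_ne (Finset.sum_nonneg fun i _ => sq_nonneg _) (Ne.symm hS)
    set c : ℝ := (Real.sqrt S)⁻¹ with hc
    have hsq : Real.sqrt S ^ 2 = S := Real.sq_sqrt hSpos.le
    have hsp : 0 < Real.sqrt S := Real.sqrt_pos.mpr hSpos
    have h1 : ∑ i, (c • y) i ^ 2 = 1 := by
      simp only [Pi.smul_apply, smul_eq_mul, mul_pow, ← Finset.mul_sum]
      rw [hc, ← hSdef, inv_pow, hsq, inv_mul_cancel₀ hS]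
    have := hmax _ h1
    rw [quadForm_smul] at this
    have hc2 : c ^ 2 = S⁻¹ := by rw [hc, inv_pow, hsq]
    rw [hc2] at this
    calc quadForm A y = S * (S⁻¹ * quadForm A y) := by
          field_simp
      _ ≤ S * quadForm A x := by
          exact mul_le_mul_of_nonneg_left this hSpos.le
      _ = quadForm A x * S := mul_comm _ _

lemma sSup_eig_eq {V : Type*} [DecidableEq V] [Fintype V]
    (A : Matrix V V ℝ) (hsym : A.IsHermitian) (hnn : ∀ i j, 0 ≤ A i j) {x : V → ℝ}
    (hxnn : ∀ i, 0 ≤ x i) (hx : ∑ i, x i ^ 2 = 1)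
    (hmax : ∀ y : V → ℝ, (∑ i, y i ^ 2 = 1) → quadForm A y ≤ quadForm A x) :
    sSup {r : ℝ | ∃ (μ : ℝ) (y : V → ℝ), y ≠ 0 ∧ A.mulVec y = μ • y ∧ r = |μ|}
      = quadForm A x := by
  have hub : ∀ r ∈ {r : ℝ | ∃ (μ : ℝ) (y : V → ℝ), y ≠ 0 ∧ A.mulVec y = μ • y ∧ r = |μ|},
      r ≤ quadForm A x := by
    rintro r ⟨μ, y, hy0, heig, rfl⟩
    have hSpos : 0 < ∑ i, y i ^ 2 := by
      rcases Function.ne_iff.mp hy0 with ⟨i, hi⟩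
      have hi' : y i ≠ 0 := hi
      exact Finset.sum_pos' (fun j _ => sq_nonneg _) ⟨i, Finset.mem_univ i, by positivity⟩
    have hqy : quadForm A y = μ * ∑ i, y i ^ 2 := by
      rw [quadForm, heig]
      simp only [Pi.smul_apply, smul_eq_mul, mul_assoc, ← Finset.mul_sum]
      congr 1; exact Finset.sum_congr rfl fun i _ => by rw [sq]
    have habs : |μ| * ∑ i, y i ^ 2 ≤ quadForm A x * ∑ i, y i ^ 2 := by
      calc |μ| * ∑ i, y i ^ 2 = |μ * ∑ i, y i ^ 2| := by
            rw [abs_mul, abs_of_nonneg hSpos.le]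
        _ = |quadForm A y| := by rw [hqy]
        _ ≤ quadForm A (fun i => |y i|) := quadForm_abs_le A hnn y
        _ ≤ quadForm A x * ∑ i, |y i| ^ 2 := quadForm_le_bound A hmax _
        _ = quadForm A x * ∑ i, y i ^ 2 := by simp [sq_abs]
    exact le_of_mul_le_mul_right habs hSpos
  have hx0 : x ≠ 0 := by
    intro h; rw [h] at hx; simpa using hx
  have hmem : quadForm A x ∈
      {r : ℝ | ∃ (μ : ℝ) (y : V → ℝ), y ≠ 0 ∧ A.mulVec y = μ • y ∧ r = |μ|} := by
    refine ⟨quadForm A x, x, hx0, maxOn_eigen A hsym hx hmax, ?_⟩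
    rw [abs_of_nonneg (quadForm_nonneg A hnn x hxnn)]
  exact le_antisymm (Real.sSup_le hub (quadForm_nonneg A hnn x hxnn))
    (le_csSup ⟨quadForm A x, hub⟩ hmem)

end MatrixLemmas


section FinHypergraphLemmas

namespace FinHypergraph

variable {V : Type*} [DecidableEq V] [Fintype V]

lemma adj_isHermitian (G : FinHypergraph V) : G.adjMatrix.IsHermitian := by
  ext i j
  simp only [Matrix.conjTranspose_apply, star_trivial]
  unfold FinHypergraph.adjMatrix
  simp only [Matrix.of_apply]
  by_cases h : i = j
  · subst h; rfl
  · rw [if_neg h, if_neg (Ne.symm h)]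
    congr 1
    apply Finset.filter_congr
    intro s _
    simp [and_comm]

lemma adj_nonneg (G : FinHypergraph V) (i j : V) : 0 ≤ G.adjMatrix i j := by
  unfold FinHypergraph.adjMatrix
  simp only [Matrix.of_apply]
  split
  · exact le_refl 0
  · refine Finset.sum_nonneg fun s hs => ?_
    have h2 := G.two_le_card s (Finset.mem_filter.mp hs).1
    have : (1:ℝ) ≤ (s.card : ℝ) - 1 := by
      have : (2:ℝ) ≤ (s.card : ℝ) := by exact_mod_cast h2
      linarith
    positivity

lemma adj_pos (G : FinHypergraph V) {i j : V} (hij : i ≠ j) {s : Finset V}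
    (hs : s ∈ G.edges) (hi : i ∈ s) (hj : j ∈ s) : 0 < G.adjMatrix i j := by
  unfold FinHypergraph.adjMatrix
  simp only [Matrix.of_apply, if_neg hij]
  refine Finset.sum_pos' (fun t ht => ?_) ⟨s, ?_, ?_⟩
  · have h2 := G.two_le_card t (Finset.mem_filter.mp ht).1
    have : (1:ℝ) ≤ (t.card : ℝ) - 1 := by
      have : (2:ℝ) ≤ (t.card : ℝ) := by exact_mod_cast h2
      linarith
    positivity
  · exact Finset.mem_filter.mpr ⟨hs, hi, hj⟩
  · have h2 := G.two_le_card s hs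
    have : (1:ℝ) ≤ (s.card : ℝ) - 1 := by
      have : (2:ℝ) ≤ (s.card : ℝ) := by exact_mod_cast h2
      linarith
    positivity

lemma eigen_zero_prop (G : FinHypergraph V) {mu : ℝ} (hmu : 0 ≤ mu) {X : V → ℝ}
    (hXnn : ∀ i, 0 ≤ X i) (heig : G.adjMatrix.mulVec X = mu • X) {a b : V}
    (hab : Relation.ReflTransGen (fun a b => ∃ s ∈ G.edges, a ∈ s ∧ b ∈ s) a b)
    (ha : X a = 0) : X b = 0 := by
  induction hab with
  | refl => exact ha
  | @tail b' c' h₁ h₂ ih =>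
    obtain ⟨s, hs, hbs, hcs⟩ := h₂
    by_cases hbc : b' = c'
    · exact hbc ▸ ih
    · have hrow : G.adjMatrix.mulVec X b' = 0 := by
        rw [heig]; simp [ih]
      rw [Matrix.mulVec, dotProduct] at hrow
      have hterm := (Finset.sum_eq_zero_iff_of_nonneg
        (fun j _ => mul_nonneg (G.adj_nonneg b' j) (hXnn j))).mp hrow c' (Finset.mem_univ c')
      have hpos := G.adj_pos hbc hs hbs hcs
      rcases mul_eq_zero.mp hterm with h | h
      · exact absurd h hpos.ne'
      · exact h

end FinHypergraph

end FinHypergraphLemmas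

/-- Adding a new edge `e` (possibly with new vertices) to a connected
hypergraph `𝒢`, so that the result `𝒢' = 𝒢 + e` is connected, strictly increases the
spectral radius. -/
theorem add_edge_increases_spectral_radius
    {V W : Type*} [DecidableEq V] [Fintype V] [DecidableEq W] [Fintype W]
    (G : FinHypergraph V) (G' : FinHypergraph W) (ι : V ↪ W)
    (k : ℕ) (e : Finset W) (hek : e.card = k)
    (hnew : e ∉ Finset.image (fun s => s.image ι) G.edges)
    (hG' : G'.edges = Finset.image (fun s => s.image ι) G.edges ∪ {e})
    (hcover : ∀ x : W, (∃ v, ι v = x) ∨ x ∈ e)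
    (hGc : G.IsConnected) (hG'c : G'.IsConnected) :
    G.spectralRadius < G'.spectralRadius := by
  haveI hV : Nonempty V := hGc.1
  haveI hW : Nonempty W := hG'c.1
  have heG' : e ∈ G'.edges := by
    rw [hG']; exact Finset.mem_union_right _ (Finset.mem_singleton_self e)
  have hk2 : 2 ≤ k := hek ▸ G'.two_le_card e heG'
  have hk1R : (1:ℝ) ≤ (k:ℝ) - 1 := by
    have : (2:ℝ) ≤ (k:ℝ) := by exact_mod_cast hk2
    linarith
  have hkpos : (0:ℝ) < 1 / ((k:ℝ) - 1) := by positivity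
  obtain ⟨X, hXnn, hX1, hXmax⟩ := exists_nonneg_max G.adjMatrix G.adj_nonneg
  obtain ⟨X', hX'nn, hX'1, hX'max⟩ := exists_nonneg_max G'.adjMatrix G'.adj_nonneg
  set ρ := quadForm G.adjMatrix X with hρ
  set ρ' := quadForm G'.adjMatrix X' with hρ'
  have hsR : G.spectralRadius = ρ :=
    sSup_eig_eq _ G.adj_isHermitian G.adj_nonneg hXnn hX1 hXmax
  have hsR' : G'.spectralRadius = ρ' :=
    sSup_eig_eq _ G'.adj_isHermitian G'.adj_nonneg hX'nn hX'1 hX'max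
  have hXeig : G.adjMatrix.mulVec X = ρ • X := maxOn_eigen _ G.adj_isHermitian hX1 hXmax
  have hρnn : 0 ≤ ρ := quadForm_nonneg _ G.adj_nonneg X hXnn
  have hρ'nn : 0 ≤ ρ' := quadForm_nonneg _ G'.adj_nonneg X' hX'nn
  have hXpos : ∀ a, 0 < X a := by
    intro a
    rcases lt_or_eq_of_le (hXnn a) with h | h
    · exact h
    · exfalso
      have hall : ∀ v, X v = 0 := fun v =>
        G.eigen_zero_prop hρnn hXnn hXeig (hGc.2 a v) h.symm
      have : (0:ℝ) = 1 := by
        rw [← hX1]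
        exact (Finset.sum_eq_zero (fun i _ => by rw [hall i]; ring)).symm
      exact one_ne_zero this.symm
  -- the extension of X by zero
  set z : W → ℝ := Function.extend ι X (fun _ => 0) with hz
  have hzι : ∀ a, z (ι a) = X a := fun a => Function.Injective.extend_apply ι.injective X _ a
  have hzout : ∀ w, (¬ ∃ a, ι a = w) → z w = 0 := fun w h => Function.extend_apply' X _ w h
  have hznn : ∀ w, 0 ≤ z w := by
    intro w
    by_cases h : ∃ a, ι a = w
    · obtain ⟨a, rfl⟩ := h; rw [hzι]; exact (hXpos a).le
    · rw [hzout w h]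
  have hrestrict : ∀ f : W → ℝ, (∀ w, (¬ ∃ a, ι a = w) → f w = 0) →
      ∑ w, f w = ∑ a, f (ι a) := by
    intro f hf
    rw [← Finset.sum_image (f := f) (fun a _ b _ h => ι.injective h)]
    refine (Finset.sum_subset (Finset.subset_univ _) ?_).symm
    intro w _ hw
    refine hf w ?_
    rintro ⟨a, rfl⟩
    exact hw (Finset.mem_image.mpr ⟨a, Finset.mem_univ a, rfl⟩)
  have hz1 : ∑ w, z w ^ 2 = 1 := by
    rw [hrestrict (fun w => z w ^ 2) (fun w h => by show z w ^ 2 = 0; rw [hzout w h]; ring)]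
    simp only [hzι]; exact hX1
  -- split A' = B + C
  set C : Matrix W W ℝ := Matrix.of (fun i j => if i = j then 0 else
    if i ∈ e ∧ j ∈ e then 1 / ((k:ℝ) - 1) else 0) with hC
  set B : Matrix W W ℝ := Matrix.of (fun i j => if i = j then 0 else
    ∑ s ∈ G.edges.filter (fun s => i ∈ s.image ι ∧ j ∈ s.image ι),
      1 / ((s.card : ℝ) - 1)) with hB
  have hsplit : G'.adjMatrix = B + C := by
    ext i j
    simp only [Matrix.add_apply, hB, hC, Matrix.of_apply]
    unfold FinHypergraph.adjMatrix
    simp only [Matrix.of_apply]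
    by_cases h : i = j
    · simp [h]
    · rw [if_neg h, if_neg h, if_neg h, hG', Finset.filter_union, Finset.sum_union]
      · congr 1
        · rw [Finset.sum_filter,
            Finset.sum_image (fun s _ t _ hst => Finset.image_injective ι.injective hst),
            ← Finset.sum_filter]
          exact Finset.sum_congr rfl fun s _ => by
            rw [Finset.card_image_of_injective _ ι.injective]
        · by_cases hc : i ∈ e ∧ j ∈ e
          · rw [Finset.filter_singleton, if_pos hc, Finset.sum_singleton, hek, if_pos hc]
          · rw [Finset.filter_singleton, if_neg hc, Finset.sum_empty, if_neg hc]
      · refine Finset.disjoint_left.mpr ?_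
        intro s hs1 hs2
        have h1 := (Finset.mem_filter.mp hs1).1
        have h2 := (Finset.mem_filter.mp hs2).1
        rw [Finset.mem_singleton] at h2
        exact hnew (h2 ▸ h1)
  have hqadd : ∀ y : W → ℝ, quadForm G'.adjMatrix y = quadForm B y + quadForm C y := by
    intro y
    rw [hsplit]
    simp [quadForm, Matrix.add_mulVec, Pi.add_apply, add_mul, Finset.sum_add_distrib]
  have hB_emb : ∀ a b : V, B (ι a) (ι b) = G.adjMatrix a b := by
    intro a b
    simp only [hB, Matrix.of_apply]
    unfold FinHypergraph.adjMatrix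
    simp only [Matrix.of_apply]
    by_cases h : a = b
    · simp [h]
    · rw [if_neg (fun hh => h (ι.injective hh)), if_neg h]
      congr 1
      apply Finset.filter_congr
      intro s _
      constructor
      · rintro ⟨h1, h2⟩
        obtain ⟨a', ha', haa⟩ := Finset.mem_image.mp h1
        obtain ⟨b', hb', hbb⟩ := Finset.mem_image.mp h2
        exact ⟨ι.injective haa ▸ ha', ι.injective hbb ▸ hb'⟩
      · rintro ⟨h1, h2⟩
        exact ⟨Finset.mem_image_of_mem _ h1, Finset.mem_image_of_mem _ h2⟩
  have hBz : quadForm B z = ρ := by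
    rw [quadForm_double,
      hrestrict (fun i => ∑ j, B i j * z j * z i) (fun i hi => Finset.sum_eq_zero fun j _ => by rw [hzout i hi]; ring)]
    have hin : ∀ a : V, ∑ j, B (ι a) j * z j * z (ι a)
        = ∑ b, B (ι a) (ι b) * z (ι b) * z (ι a) :=
      fun a => hrestrict (fun j => B (ι a) j * z j * z (ι a)) (fun j hj => by show B (ι a) j * z j * z (ι a) = 0; rw [hzout j hj]; ring)
    rw [Finset.sum_congr rfl (fun a _ => hin a), hρ, quadForm_double]
    exact Finset.sum_congr rfl fun a _ => Finset.sum_congr rfl fun b _ => by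
      rw [hB_emb, hzι, hzι]
  have hCnn : ∀ i j, 0 ≤ C i j := by
    intro i j
    simp only [hC, Matrix.of_apply]
    split
    · exact le_refl 0
    · split
      · exact hkpos.le
      · exact le_refl 0
  have hCznn : 0 ≤ quadForm C z := quadForm_nonneg _ hCnn z hznn
  have hkey : ρ + quadForm C z ≤ ρ' := by
    have h1 := hX'max z hz1
    rw [hqadd z, hBz] at h1
    exact h1
  have hle : ρ ≤ ρ' := le_trans (le_add_of_nonneg_right hCznn) hkey
  rw [hsR, hsR']
  rcases lt_or_eq_of_le hle with h | h
  · exact h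
  · exfalso
    have hCz0 : quadForm C z = 0 := le_antisymm (by linarith) hCznn
    have hqz : quadForm G'.adjMatrix z = ρ' := by
      rw [hqadd z, hBz, hCz0, add_zero, h]
    by_cases hecov : ∀ w ∈ e, ∃ a, ι a = w
    · obtain ⟨i₀, hi₀, j₀, hj₀, hij⟩ := Finset.one_lt_card.mp (show 1 < e.card by omega)
      obtain ⟨a₀, ha₀⟩ := hecov i₀ hi₀
      obtain ⟨b₀, hb₀⟩ := hecov j₀ hj₀
      have hzi₀ : 0 < z i₀ := by rw [← ha₀, hzι]; exact hXpos a₀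
      have hzj₀ : 0 < z j₀ := by rw [← hb₀, hzι]; exact hXpos b₀
      have hCij : C i₀ j₀ = 1 / ((k:ℝ) - 1) := by
        simp only [hC, Matrix.of_apply, if_neg hij, if_pos (⟨hi₀, hj₀⟩ : i₀ ∈ e ∧ j₀ ∈ e)]
      have hpos : 0 < quadForm C z := by
        rw [quadForm_double]
        refine Finset.sum_pos' (fun i _ => Finset.sum_nonneg fun j _ =>
          mul_nonneg (mul_nonneg (hCnn i j) (hznn j)) (hznn i)) ⟨i₀, Finset.mem_univ _, ?_⟩
        refine Finset.sum_pos' (fun j _ =>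
          mul_nonneg (mul_nonneg (hCnn i₀ j) (hznn j)) (hznn i₀)) ⟨j₀, Finset.mem_univ _, ?_⟩
        rw [hCij]
        exact mul_pos (mul_pos hkpos hzj₀) hzi₀
      exact hpos.ne' hCz0
    · push_neg at hecov
      obtain ⟨w₀, hw₀e, hw₀⟩ := hecov
      have hzw₀ : z w₀ = 0 := hzout w₀ (by rintro ⟨a, ha⟩; exact hw₀ a ha)
      have hzmax : ∀ y : W → ℝ, (∑ i, y i ^ 2 = 1) →
          quadForm G'.adjMatrix y ≤ quadForm G'.adjMatrix z := by
        intro y hy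
        rw [hqz]; exact hX'max y hy
      have hzeig := maxOn_eigen _ G'.adj_isHermitian hz1 hzmax
      rw [hqz] at hzeig
      have hall : ∀ v, z v = 0 := fun v =>
        G'.eigen_zero_prop hρ'nn hznn hzeig (hG'c.2 w₀ v) hzw₀
      have : (0:ℝ) = 1 := by
        rw [← hz1]
        exact (Finset.sum_eq_zero (fun i _ => by rw [hall i]; ring)).symm
      exact one_ne_zero this.symm
end
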